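/- arXiv:2011.08447 — 11 statements merged into one kernel-verified Lean document; each statement's English description precedes it below -/
import Mathlib

section
/- Let {Y_1,…,Y_n, I} be any SDP-feasible solution, let V' ⊆ V, and let 0 ≤ ε ≤ 1. If ‖Y_i‖² ≥ 1 − ε for every i ∈ V', then ⟨Y_i,Y_j⟩ ≥ 1 − 3ε for all i, j ∈ V'. -/
open scoped RealInnerProductSpace BigOperators
open Finset

/-- The SDP feasibility conditions (i)-(vii) for the k-clique SDP relaxation:
vectors `X 1, …, X n, I ∈ ℝ^{n+1}` with
(i) `∑_i ⟪X i, X i⟫ = k`, (ii) `∑_j ⟪X i, X j⟫ ≤ k⟪X i, X i⟫`,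
(iii) `⟪X i, X j⟫ = 0` for non-edges, (iv) `0 ≤ ⟪X i, X j⟫ ≤ ⟪X i, X i⟫` for `i ≠ j`,
(v) `⟪X i, X i⟫ ≤ 1`, (vi) `⟪X i, I⟫ = ⟪X i, X i⟫`, (vii) `⟪I, I⟫ = 1`. -/
def SDPFeasible {n : ℕ} (k : ℕ) (Adj : Fin n → Fin n → Prop)
    (X : Fin n → EuclideanSpace ℝ (Fin (n + 1)))
    (I : EuclideanSpace ℝ (Fin (n + 1))) : Prop :=
  (∑ i, ⟪X i, X i⟫ = (k : ℝ)) ∧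
  (∀ i, ∑ j, ⟪X i, X j⟫ ≤ (k : ℝ) * ⟪X i, X i⟫) ∧
  (∀ i j, i ≠ j → ¬ Adj i j → ⟪X i, X j⟫ = 0) ∧
  (∀ i j, i ≠ j → 0 ≤ ⟪X i, X j⟫ ∧ ⟪X i, X j⟫ ≤ ⟪X i, X i⟫) ∧
  (∀ i, ⟪X i, X i⟫ ≤ 1) ∧
  (∀ i, ⟪X i, I⟫ = ⟪X i, X i⟫) ∧
  ⟪I, I⟫ = 1

/-- If `‖Y_i‖² ≥ 1 − ε` for every `i ∈ V'`, then `⟪Y_i,Y_j⟫ ≥ 1 − 3ε` for all `i, j ∈ V'`. -/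
theorem inner_ge_of_norm_ge
    (n k : ℕ) (hk : 0 < k) (hkn : k ≤ n)
    (Adj : Fin n → Fin n → Prop) (hAdjSymm : ∀ i j, Adj i j → Adj j i)
    (Y : Fin n → EuclideanSpace ℝ (Fin (n + 1)))
    (I : EuclideanSpace ℝ (Fin (n + 1)))
    (hfeas : SDPFeasible k Adj Y I)
    (V' : Finset (Fin n)) (ε : ℝ) (hε0 : 0 ≤ ε) (hε1 : ε ≤ 1)
    (hnorm : ∀ i ∈ V', 1 - ε ≤ ⟪Y i, Y i⟫) :
    ∀ i ∈ V', ∀ j ∈ V', 1 - 3 * ε ≤ ⟪Y i, Y j⟫ := by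
  obtain ⟨h1, h2, h3, h4, h5, h6, h7⟩ := hfeas
  intro i hi j hj
  have key : ∀ m ∈ V', ⟪Y m - I, Y m - I⟫ ≤ ε := by
    intro m hm
    have h := hnorm m hm
    have e1 : ⟪Y m, I⟫ = ⟪Y m, Y m⟫ := h6 m
    have e2 : ⟪I, Y m⟫ = ⟪Y m, Y m⟫ := by rw [real_inner_comm]; exact h6 m
    have : ⟪Y m - I, Y m - I⟫ = ⟪Y m, Y m⟫ - ⟪Y m, I⟫ - ⟪I, Y m⟫ + ⟪I, I⟫ := by
      simp only [inner_sub_left, inner_sub_right]; ring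
    rw [this, e1, e2, h7]; linarith
  have hi' := key i hi
  have hj' := key j hj
  set a := Y i - I with ha
  set b := Y j - I with hb
  have hcs : |⟪a, b⟫| ≤ ‖a‖ * ‖b‖ := abs_real_inner_le_norm a b
  have hna : ‖a‖ ^ 2 ≤ ε := by rw [← real_inner_self_eq_norm_sq]; exact hi'
  have hnb : ‖b‖ ^ 2 ≤ ε := by rw [← real_inner_self_eq_norm_sq]; exact hj'
  have hcross : -ε ≤ ⟪a, b⟫ := by
    have h1 : -(‖a‖ * ‖b‖) ≤ ⟪a, b⟫ := neg_le_of_abs_le hcs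
    nlinarith [norm_nonneg a, norm_nonneg b, sq_nonneg (‖a‖ - ‖b‖)]
  have ei : ⟪a, I⟫ = ⟪Y i, Y i⟫ - 1 := by
    rw [ha, inner_sub_left, h6 i, h7]
  have ej : ⟪I, b⟫ = ⟪Y j, Y j⟫ - 1 := by
    rw [hb, inner_sub_right, h7, real_inner_comm, h6 j]
  have expand : ⟪Y i, Y j⟫ = ⟪a, b⟫ + ⟪a, I⟫ + ⟪I, b⟫ + 1 := by
    rw [ha, hb]
    simp only [inner_sub_left, inner_sub_right, h7]; ring
  have hni := hnorm i hi
  have hnj := hnorm j hj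
  rw [expand, ei, ej]
  linarith
end

section
/- Let {Y_1,…,Y_n, I} be any SDP-feasible solution, let V' ⊆ V be nonempty, and let 0 ≤ ε ≤ 1. If (1/|V'|)∑_{i∈V'}‖Y_i‖² ≥ 1 − ε, then (1/|V'|²)∑_{i,j∈V'}⟨Y_i,Y_j⟩ ≥ 1 − 4ε. -/
open scoped RealInnerProductSpace BigOperators
open Finset

/-- If the average of `‖Y_i‖²` over `V'` is at least `1 − ε`, then the average of
`⟪Y_i,Y_j⟫` over pairs from `V'` is at least `1 − 4ε`. -/
theorem avg_inner_ge_of_avg_norm_ge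
    (n k : ℕ) (hk : 0 < k) (hkn : k ≤ n)
    (Adj : Fin n → Fin n → Prop) (hAdjSymm : ∀ i j, Adj i j → Adj j i)
    (Y : Fin n → EuclideanSpace ℝ (Fin (n + 1)))
    (I : EuclideanSpace ℝ (Fin (n + 1)))
    (hfeas : SDPFeasible k Adj Y I)
    (V' : Finset (Fin n)) (hV' : V'.Nonempty)
    (ε : ℝ) (hε0 : 0 ≤ ε) (hε1 : ε ≤ 1)
    (hnorm : 1 - ε ≤ (1 / (V'.card : ℝ)) * ∑ i ∈ V', ⟪Y i, Y i⟫) :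
    1 - 4 * ε ≤ (1 / (V'.card : ℝ) ^ 2) * ∑ i ∈ V', ∑ j ∈ V', ⟪Y i, Y j⟫ := by
  obtain ⟨h1, h2, h3, h4, h5, h6, h7⟩ := hfeas
  have hm0 : (0:ℝ) < (V'.card : ℝ) := by exact_mod_cast Finset.card_pos.mpr hV'
  set Z : EuclideanSpace ℝ (Fin (n+1)) := ((V'.card : ℝ))⁻¹ • ∑ i ∈ V', Y i with hZ
  have hZZ : ⟪Z, Z⟫ = (1 / (V'.card : ℝ) ^ 2) * ∑ i ∈ V', ∑ j ∈ V', ⟪Y i, Y j⟫ := by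
    simp only [hZ, real_inner_smul_left, real_inner_smul_right, sum_inner, inner_sum]
    rw [← Finset.mul_sum, Finset.sum_comm]
    ring
  have hZI : ⟪Z, I⟫ = (1 / (V'.card : ℝ)) * ∑ i ∈ V', ⟪Y i, Y i⟫ := by
    simp only [hZ, real_inner_smul_left, sum_inner, h6]
    ring
  have hInorm : ‖I‖ = 1 := by
    have h := h7
    rw [real_inner_self_eq_norm_sq] at h
    nlinarith [norm_nonneg I]
  have hZle : ⟪Z, I⟫ ≤ ‖Z‖ := by
    have := real_inner_le_norm Z I
    simpa [hInorm] using this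
  have hZnorm : 1 - ε ≤ ‖Z‖ := le_trans (by rw [hZI]; exact hnorm) hZle
  have hsq : (1 - ε)^2 ≤ ⟪Z, Z⟫ := by
    rw [real_inner_self_eq_norm_sq]
    nlinarith [norm_nonneg Z]
  rw [← hZZ]
  nlinarith
end

section
/- For every SDP-feasible solution {X_1,…,X_n, I}, one has (1/k²)∑_{i,j∈S}⟨X_i,X_j⟩ ≥ 4·E_{i∼S}‖X_i‖² − 3. -/
open scoped RealInnerProductSpace BigOperators
open Finset

/-- `(1/k²)∑_{i,j∈S}⟪X_i,X_j⟫ ≥ 4·E_{i∼S}‖X_i‖² − 3`. -/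
theorem avg_inner_S_lower_bound
    (n k : ℕ) (hk : 0 < k) (hkn : k ≤ n)
    (Adj : Fin n → Fin n → Prop) (hAdjSymm : ∀ i j, Adj i j → Adj j i)
    (S : Finset (Fin n)) (hS : S.card = k)
    (X : Fin n → EuclideanSpace ℝ (Fin (n + 1)))
    (I : EuclideanSpace ℝ (Fin (n + 1)))
    (hfeas : SDPFeasible k Adj X I) :
    4 * ((1 / (k : ℝ)) * ∑ i ∈ S, ⟪X i, X i⟫) - 3 ≤
      (1 / (k : ℝ) ^ 2) * ∑ i ∈ S, ∑ j ∈ S, ⟪X i, X j⟫ := by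
  obtain ⟨h1, h2, h3, h4, h5, h6, h7⟩ := hfeas
  have hkpos : (0:ℝ) < k := Nat.cast_pos.mpr hk
  set A : ℝ := ∑ i ∈ S, ⟪X i, X i⟫ with hA
  have hAle : A ≤ (k:ℝ) := by
    calc A ≤ ∑ _i ∈ S, (1:ℝ) := Finset.sum_le_sum (fun i _ => h5 i)
    _ = (k:ℝ) := by simp [hS]
  -- key: ∑∑ ≥ 2kA - k²
  have hkey : 2 * (k:ℝ) * A - (k:ℝ)^2 ≤ ∑ i ∈ S, ∑ j ∈ S, ⟪X i, X j⟫ := by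
    have h0 : (0:ℝ) ≤ ⟪(∑ i ∈ S, X i) - (k:ℝ) • I, (∑ i ∈ S, X i) - (k:ℝ) • I⟫ :=
      real_inner_self_nonneg
    have hexp : ⟪(∑ i ∈ S, X i) - (k:ℝ) • I, (∑ i ∈ S, X i) - (k:ℝ) • I⟫
        = (∑ i ∈ S, ∑ j ∈ S, ⟪X i, X j⟫) - 2 * (k:ℝ) * A + (k:ℝ)^2 := by
      have hIx : ∀ j, ⟪I, X j⟫ = ⟪X j, X j⟫ := fun j => by rw [real_inner_comm, h6]
      rw [inner_sub_sub_self]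
      simp only [sum_inner, inner_sum, real_inner_smul_left, real_inner_smul_right, h7, h6, hIx]
      rw [Finset.sum_comm, ← Finset.mul_sum, ← hA]
      ring
    nlinarith [h0, hexp]
  have h4A : 4 * ((1/(k:ℝ)) * A) - 3 ≤ 2 * ((1/(k:ℝ)) * A) - 1 := by
    have : (1/(k:ℝ)) * A ≤ 1 := by
      rw [div_mul_eq_mul_div, one_mul, div_le_one hkpos]; exact hAle
    linarith
  have hmul : (1/(k:ℝ)^2) * (2 * (k:ℝ) * A - (k:ℝ)^2) ≤
      (1/(k:ℝ)^2) * ∑ i ∈ S, ∑ j ∈ S, ⟪X i, X j⟫ :=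
    mul_le_mul_of_nonneg_left hkey (by positivity)
  have heq : (1/(k:ℝ)^2) * (2 * (k:ℝ) * A - (k:ℝ)^2) = 2 * ((1/(k:ℝ)) * A) - 1 := by
    field_simp
  linarith
end

section
/- For every SDP-feasible solution {X_1,…,X_n, I}, one has ∑_{i∈S, j∈V∖S} ⟨X_i,X_j⟩ ≤ 3k²(1 − E_{i∼S}‖X_i‖²). -/
open scoped RealInnerProductSpace BigOperators
open Finset

/-- Cross contribution: `∑_{i∈S, j∈V∖S} ⟪X_i,X_j⟫ ≤ 3k²(1 − E_{i∼S}‖X_i‖²)`. -/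
theorem cross_contribution
    (n k : ℕ) (hk : 0 < k) (hkn : k ≤ n)
    (Adj : Fin n → Fin n → Prop) (hAdjSymm : ∀ i j, Adj i j → Adj j i)
    (S : Finset (Fin n)) (hS : S.card = k)
    (X : Fin n → EuclideanSpace ℝ (Fin (n + 1)))
    (I : EuclideanSpace ℝ (Fin (n + 1)))
    (hfeas : SDPFeasible k Adj X I) :
    ∑ i ∈ S, ∑ j ∈ Sᶜ, ⟪X i, X j⟫ ≤
      3 * (k : ℝ) ^ 2 * (1 - (1 / (k : ℝ)) * ∑ i ∈ S, ⟪X i, X i⟫) := by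
  obtain ⟨h1, h2, h3, h4, h5, h6, h7⟩ := hfeas
  set A : ℝ := ∑ i ∈ S, ⟪X i, X i⟫ with hA
  set v := ∑ i ∈ S, X i with hv
  have hvI : ⟪v, I⟫ = A := by
    rw [hv, sum_inner]; exact Finset.sum_congr rfl fun i _ => h6 i
  have hvv : ⟪v, v⟫ = ∑ i ∈ S, ∑ j ∈ S, ⟪X i, X j⟫ := by
    rw [hv, sum_inner]; exact Finset.sum_congr rfl fun i _ => inner_sum _ _ _
  have hCS : A * A ≤ ∑ i ∈ S, ∑ j ∈ S, ⟪X i, X j⟫ := by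
    have h := real_inner_mul_inner_self_le v I
    rw [hvI, h7, hvv] at h
    linarith
  have hsplit : ∀ i, ∑ j ∈ Sᶜ, ⟪X i, X j⟫
      = (∑ j, ⟪X i, X j⟫) - ∑ j ∈ S, ⟪X i, X j⟫ := by
    intro i
    rw [← Finset.sum_add_sum_compl S (fun j => ⟪X i, X j⟫)]; ring
  have hUB : ∑ i ∈ S, ∑ j ∈ Sᶜ, ⟪X i, X j⟫ ≤ (k : ℝ) * A - A * A := by
    have heq : ∑ i ∈ S, ∑ j ∈ Sᶜ, ⟪X i, X j⟫
        = (∑ i ∈ S, ∑ j, ⟪X i, X j⟫) - ∑ i ∈ S, ∑ j ∈ S, ⟪X i, X j⟫ := by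
      rw [← Finset.sum_sub_distrib]
      exact Finset.sum_congr rfl fun i _ => hsplit i
    have hb : ∑ i ∈ S, ∑ j, ⟪X i, X j⟫ ≤ (k : ℝ) * A := by
      rw [hA, Finset.mul_sum]
      exact Finset.sum_le_sum fun i _ => h2 i
    rw [heq]; linarith
  have hAk : A ≤ (k : ℝ) := by
    rw [hA]
    calc ∑ i ∈ S, ⟪X i, X i⟫ ≤ ∑ _i ∈ S, (1 : ℝ) :=
          Finset.sum_le_sum fun i _ => h5 i
      _ = (k : ℝ) := by rw [Finset.sum_const, hS]; simp
  have hA0 : 0 ≤ A := Finset.sum_nonneg fun i _ => real_inner_self_nonneg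
  have hk1 : (1 : ℝ) ≤ (k : ℝ) := by exact_mod_cast hk
  have hk0 : (k : ℝ) ≠ 0 := by linarith
  have hrhs : 3 * (k : ℝ) ^ 2 * (1 - (1 / (k : ℝ)) * A)
      = 3 * (k : ℝ) ^ 2 - 3 * (k : ℝ) * A := by
    field_simp
  rw [hrhs]
  nlinarith [mul_nonneg (by linarith : (0:ℝ) ≤ 3 * (k:ℝ) - A)
    (by linarith : (0:ℝ) ≤ (k:ℝ) - A)]
end

section
/- Let Λ_1,…,Λ_r be pairwise disjoint subsets of V ∖ S. Then for every SDP-feasible solution {X_1,…,X_n, I}, one has ∑_{ℓ=1}^{r} ∑_{i∈Λ_ℓ, j∈(V∖S)∖Λ_ℓ} ⟨X_i,X_j⟩ ≤ k²(1 − E_{i∼S}‖X_i‖²). -/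
open scoped RealInnerProductSpace BigOperators
open Finset

/-- Cross contribution of the expander blocks `Λ_1, …, Λ_r ⊆ V ∖ S`:
`∑_ℓ ∑_{i∈Λ_ℓ, j∈(V∖S)∖Λ_ℓ} ⟪X_i,X_j⟫ ≤ k²(1 − E_{i∼S}‖X_i‖²)`. -/
theorem expander_cross_contribution
    (n k r : ℕ) (hk : 0 < k) (hkn : k ≤ n)
    (Adj : Fin n → Fin n → Prop) (hAdjSymm : ∀ i j, Adj i j → Adj j i)
    (S : Finset (Fin n)) (hS : S.card = k)
    (L : Fin r → Finset (Fin n))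
    (hLsub : ∀ ℓ, L ℓ ⊆ Sᶜ)
    (hLdisj : ∀ ℓ ℓ', ℓ ≠ ℓ' → Disjoint (L ℓ) (L ℓ'))
    (X : Fin n → EuclideanSpace ℝ (Fin (n + 1)))
    (I : EuclideanSpace ℝ (Fin (n + 1)))
    (hfeas : SDPFeasible k Adj X I) :
    ∑ ℓ : Fin r, ∑ i ∈ L ℓ, ∑ j ∈ Sᶜ \ L ℓ, ⟪X i, X j⟫ ≤
      (k : ℝ) ^ 2 * (1 - (1 / (k : ℝ)) * ∑ i ∈ S, ⟪X i, X i⟫) := by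
  obtain ⟨hi, hii, hiii, hiv, hv, hvi, hvii⟩ := hfeas
  have hnn : ∀ i j, (0:ℝ) ≤ ⟪X i, X j⟫ := by
    intro i j
    rcases eq_or_ne i j with rfl | h
    · exact real_inner_self_nonneg
    · exact (hiv i j h).1
  -- Step A: LHS ≤ double sum over Sᶜ
  have stepA : ∑ ℓ : Fin r, ∑ i ∈ L ℓ, ∑ j ∈ Sᶜ \ L ℓ, ⟪X i, X j⟫ ≤
      ∑ i ∈ Sᶜ, ∑ j ∈ Sᶜ, ⟪X i, X j⟫ := by
    have hA : ∀ ℓ : Fin r, ∑ i ∈ L ℓ, ∑ j ∈ Sᶜ \ L ℓ, ⟪X i, X j⟫ ≤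
        ∑ i ∈ L ℓ, ∑ j ∈ Sᶜ, ⟪X i, X j⟫ := by
      intro ℓ
      refine Finset.sum_le_sum fun i _ => ?_
      exact Finset.sum_le_sum_of_subset_of_nonneg (Finset.sdiff_subset)
        (fun j _ _ => hnn i j)
    calc ∑ ℓ : Fin r, ∑ i ∈ L ℓ, ∑ j ∈ Sᶜ \ L ℓ, ⟪X i, X j⟫
        ≤ ∑ ℓ : Fin r, ∑ i ∈ L ℓ, ∑ j ∈ Sᶜ, ⟪X i, X j⟫ :=
          Finset.sum_le_sum fun ℓ _ => hA ℓ
      _ = ∑ i ∈ Finset.univ.biUnion L, ∑ j ∈ Sᶜ, ⟪X i, X j⟫ :=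
          (Finset.sum_biUnion (fun a _ b _ hab => hLdisj a b hab)).symm
      _ ≤ ∑ i ∈ Sᶜ, ∑ j ∈ Sᶜ, ⟪X i, X j⟫ := by
          refine Finset.sum_le_sum_of_subset_of_nonneg
            (Finset.biUnion_subset.mpr fun ℓ _ => hLsub ℓ) ?_
          intro i _ _
          exact Finset.sum_nonneg fun j _ => hnn i j
  -- Step B: double sum over Sᶜ ≤ k * ∑_{Sᶜ} ‖X i‖²
  have stepB : ∑ i ∈ Sᶜ, ∑ j ∈ Sᶜ, ⟪X i, X j⟫ ≤
      (k : ℝ) * ∑ i ∈ Sᶜ, ⟪X i, X i⟫ := by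
    rw [Finset.mul_sum]
    refine Finset.sum_le_sum fun i _ => ?_
    calc ∑ j ∈ Sᶜ, ⟪X i, X j⟫ ≤ ∑ j, ⟪X i, X j⟫ :=
          Finset.sum_le_sum_of_subset_of_nonneg (Finset.subset_univ _)
            (fun j _ _ => hnn i j)
      _ ≤ (k : ℝ) * ⟪X i, X i⟫ := hii i
  -- Step C: total mass bound ∑_V ‖X i‖² ≤ k
  have hk1 : (1 : ℝ) ≤ (k : ℝ) := by exact_mod_cast hk
  have stepC : ∑ i, ⟪X i, X i⟫ ≤ (k : ℝ) := by
    exact le_of_eq hi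
  -- assemble
  have hsplit : ∑ i ∈ S, ⟪X i, X i⟫ + ∑ i ∈ Sᶜ, ⟪X i, X i⟫ = ∑ i, ⟪X i, X i⟫ :=
    Finset.sum_add_sum_compl S _
  have hk0 : (k : ℝ) ≠ 0 := by positivity
  have hrhs : (k : ℝ) ^ 2 * (1 - (1 / (k : ℝ)) * ∑ i ∈ S, ⟪X i, X i⟫) =
      (k : ℝ) ^ 2 - (k : ℝ) * ∑ i ∈ S, ⟪X i, X i⟫ := by
    field_simp
  rw [hrhs]
  have : (k : ℝ) * ∑ i ∈ Sᶜ, ⟪X i, X i⟫ ≤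
      (k : ℝ) ^ 2 - (k : ℝ) * ∑ i ∈ S, ⟪X i, X i⟫ := by
    nlinarith [stepC, hsplit, hk1]
  linarith [stepA, stepB]
end

section
/- Let V be partitioned into blocks S, Λ_1,…,Λ_r, Π_1,…,Π_t, let β ≥ 0, and let B be a symmetric real n×n matrix with spectral norm ‖B‖ ≤ β such that B_{ij} = 0 whenever i and j lie in the same block of the partition. Then for every SDP-feasible solution {X_1,…,X_n, I}, one has ∑_{i,j∈V} B_{ij}⟨X_i,X_j⟩ ≤ 2βk·√(r+t+1)·√(1 − E_{i∼S}‖X_i‖²). -/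
open scoped RealInnerProductSpace BigOperators
open Finset

lemma csSum {α : Type*} (s : Finset α) (f g : α → ℝ) (hf : ∀ a ∈ s, 0 ≤ f a)
    (hg : ∀ a ∈ s, 0 ≤ g a) :
    ∑ a ∈ s, Real.sqrt (f a) * Real.sqrt (g a) ≤
      Real.sqrt (∑ a ∈ s, f a) * Real.sqrt (∑ a ∈ s, g a) := by
  have h := Finset.sum_mul_sq_le_sq_mul_sq s (fun a => Real.sqrt (f a)) (fun a => Real.sqrt (g a))
  have h1 : ∀ a ∈ s, Real.sqrt (f a) ^ 2 = f a := fun a ha => Real.sq_sqrt (hf a ha)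
  have h2 : ∀ a ∈ s, Real.sqrt (g a) ^ 2 = g a := fun a ha => Real.sq_sqrt (hg a ha)
  rw [Finset.sum_congr rfl h1, Finset.sum_congr rfl h2] at h
  have hnn : 0 ≤ ∑ a ∈ s, Real.sqrt (f a) * Real.sqrt (g a) :=
    Finset.sum_nonneg fun a _ => mul_nonneg (Real.sqrt_nonneg _) (Real.sqrt_nonneg _)
  calc ∑ a ∈ s, Real.sqrt (f a) * Real.sqrt (g a)
      = Real.sqrt ((∑ a ∈ s, Real.sqrt (f a) * Real.sqrt (g a)) ^ 2) := (Real.sqrt_sq hnn).symm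
    _ ≤ Real.sqrt ((∑ a ∈ s, f a) * (∑ a ∈ s, g a)) := Real.sqrt_le_sqrt h
    _ = _ := Real.sqrt_mul (Finset.sum_nonneg hf) _

lemma specBound {n : ℕ} (β : ℝ) (hβ : 0 ≤ β) (B : Matrix (Fin n) (Fin n) ℝ)
    (hBnorm : ‖Matrix.toEuclideanCLM (𝕜 := ℝ) B‖ ≤ β)
    (X : Fin n → EuclideanSpace ℝ (Fin (n + 1))) (U U' : Finset (Fin n)) :
    ∑ i ∈ U, ∑ j ∈ U', B i j * ⟪X i, X j⟫ ≤
      β * (Real.sqrt (∑ i ∈ U, ⟪X i, X i⟫) * Real.sqrt (∑ j ∈ U', ⟪X j, X j⟫)) := by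
  classical
  set T := Matrix.toEuclideanCLM (𝕜 := ℝ) B with hT
  set u : Fin (n+1) → EuclideanSpace ℝ (Fin n) :=
    fun c => (WithLp.equiv 2 _).symm (fun i => if i ∈ U then X i c else 0) with hu
  set v : Fin (n+1) → EuclideanSpace ℝ (Fin n) :=
    fun c => (WithLp.equiv 2 _).symm (fun i => if i ∈ U' then X i c else 0) with hv
  have happ : ∀ c i, u c i = if i ∈ U then X i c else 0 := fun c i => rfl
  have happ' : ∀ c i, v c i = if i ∈ U' then X i c else 0 := fun c i => rfl
  have expand : ∀ c, ⟪u c, T (v c)⟫ = ∑ i ∈ U, ∑ j ∈ U', X i c * (B i j * X j c) := by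
    intro c
    have hTv : T (v c) = (WithLp.equiv 2 _).symm
        (Matrix.toLin' B (fun i => if i ∈ U' then X i c else 0)) := by
      rw [hv]; exact rfl
    rw [hTv, PiLp.inner_apply]
    simp only [RCLike.inner_apply, conj_trivial]
    have h1 : ∀ i : Fin n, (u c) i * ((WithLp.equiv 2 (Fin n → ℝ)).symm
        (Matrix.toLin' B (fun i => if i ∈ U' then X i c else 0))) i =
        (if i ∈ U then X i c else 0) * ∑ j, B i j * (if j ∈ U' then X j c else 0) := by
      intro i
      congr 1
    rw [Finset.sum_congr rfl (fun i _ => (mul_comm _ _).trans (h1 i))]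
    have hres : ∀ (f : Fin n → ℝ) (s : Finset (Fin n)),
        (∑ a, if a ∈ s then f a else 0) = ∑ a ∈ s, f a := by
      intro f s; rw [Finset.sum_ite_mem, Finset.univ_inter]
    calc ∑ i, (if i ∈ U then X i c else 0) * ∑ j, B i j * (if j ∈ U' then X j c else 0)
        = ∑ i, if i ∈ U then X i c * ∑ j, B i j * (if j ∈ U' then X j c else 0) else 0 := by
          refine Finset.sum_congr rfl fun i _ => ?_
          rw [ite_mul, zero_mul]
      _ = ∑ i ∈ U, X i c * ∑ j, B i j * (if j ∈ U' then X j c else 0) := hres _ _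
      _ = ∑ i ∈ U, ∑ j ∈ U', X i c * (B i j * X j c) := by
          refine Finset.sum_congr rfl fun i _ => ?_
          rw [Finset.mul_sum]
          have : ∀ j : Fin n, X i c * (B i j * (if j ∈ U' then X j c else 0)) =
              if j ∈ U' then X i c * (B i j * X j c) else 0 := fun j => by
            by_cases h : j ∈ U' <;> simp [h]
          rw [Finset.sum_congr rfl fun j _ => this j, hres]
  have key : ∑ i ∈ U, ∑ j ∈ U', B i j * ⟪X i, X j⟫ = ∑ c, ⟪u c, T (v c)⟫ := by
    refine Eq.symm ?_
    calc ∑ c, ⟪u c, T (v c)⟫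
        = ∑ c, ∑ i ∈ U, ∑ j ∈ U', X i c * (B i j * X j c) :=
          Finset.sum_congr rfl fun c _ => expand c
      _ = ∑ i ∈ U, ∑ c, ∑ j ∈ U', X i c * (B i j * X j c) := Finset.sum_comm
      _ = ∑ i ∈ U, ∑ j ∈ U', ∑ c, X i c * (B i j * X j c) :=
          Finset.sum_congr rfl fun i _ => Finset.sum_comm
      _ = ∑ i ∈ U, ∑ j ∈ U', B i j * ⟪X i, X j⟫ := by
          refine Finset.sum_congr rfl fun i _ => Finset.sum_congr rfl fun j _ => ?_
          rw [PiLp.inner_apply]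
          simp only [RCLike.inner_apply, conj_trivial]
          rw [Finset.mul_sum]
          exact Finset.sum_congr rfl fun c _ => by ring
  have hnu : ∀ c, ‖u c‖ ^ 2 = ∑ i ∈ U, X i c ^ 2 := by
    intro c
    rw [← real_inner_self_eq_norm_sq, PiLp.inner_apply]
    simp only [RCLike.inner_apply, conj_trivial, happ, ite_mul, zero_mul, mul_ite, mul_zero,
      Finset.sum_ite_mem, Finset.univ_inter, Finset.inter_self]
    refine Finset.sum_congr rfl fun i hi => ?_
    first
    | (rw [if_pos hi]; ring)
    | ring
  have hnv : ∀ c, ‖v c‖ ^ 2 = ∑ i ∈ U', X i c ^ 2 := by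
    intro c
    rw [← real_inner_self_eq_norm_sq, PiLp.inner_apply]
    simp only [RCLike.inner_apply, conj_trivial, happ', ite_mul, zero_mul, mul_ite, mul_zero,
      Finset.sum_ite_mem, Finset.univ_inter, Finset.inter_self]
    refine Finset.sum_congr rfl fun i hi => ?_
    first
    | (rw [if_pos hi]; ring)
    | ring
  have hsumu : ∑ c, ‖u c‖ ^ 2 = ∑ i ∈ U, ⟪X i, X i⟫ := by
    rw [Finset.sum_congr rfl fun c _ => hnu c, Finset.sum_comm]
    refine Finset.sum_congr rfl fun i _ => ?_
    rw [PiLp.inner_apply]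
    simp only [RCLike.inner_apply, conj_trivial]
    exact Finset.sum_congr rfl fun c _ => by ring
  have hsumv : ∑ c, ‖v c‖ ^ 2 = ∑ i ∈ U', ⟪X i, X i⟫ := by
    rw [Finset.sum_congr rfl fun c _ => hnv c, Finset.sum_comm]
    refine Finset.sum_congr rfl fun i _ => ?_
    rw [PiLp.inner_apply]
    simp only [RCLike.inner_apply, conj_trivial]
    exact Finset.sum_congr rfl fun c _ => by ring
  calc ∑ i ∈ U, ∑ j ∈ U', B i j * ⟪X i, X j⟫ = ∑ c, ⟪u c, T (v c)⟫ := key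
    _ ≤ ∑ c, ‖u c‖ * (β * ‖v c‖) := by
        refine Finset.sum_le_sum fun c _ => ?_
        calc ⟪u c, T (v c)⟫ ≤ ‖u c‖ * ‖T (v c)‖ := real_inner_le_norm _ _
          _ ≤ ‖u c‖ * (β * ‖v c‖) := by
              refine mul_le_mul_of_nonneg_left ?_ (norm_nonneg _)
              exact le_trans (T.le_opNorm (v c))
                (mul_le_mul_of_nonneg_right hBnorm (norm_nonneg _))
    _ = β * ∑ c, ‖u c‖ * ‖v c‖ := by
        rw [Finset.mul_sum]; exact Finset.sum_congr rfl fun c _ => by ring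
    _ ≤ β * (Real.sqrt (∑ c, ‖u c‖ ^ 2) * Real.sqrt (∑ c, ‖v c‖ ^ 2)) := by
        refine mul_le_mul_of_nonneg_left ?_ hβ
        have := csSum Finset.univ (fun c => ‖u c‖ ^ 2) (fun c => ‖v c‖ ^ 2)
          (fun c _ => sq_nonneg _) (fun c _ => sq_nonneg _)
        simpa [Real.sqrt_sq (norm_nonneg _)] using this
    _ = β * (Real.sqrt (∑ i ∈ U, ⟪X i, X i⟫) * Real.sqrt (∑ j ∈ U', ⟪X j, X j⟫)) := by
        rw [hsumu, hsumv]

lemma finalArith (β K D R τ0 q : ℝ) (hβ : 0 ≤ β) (hK : 0 < K) (hq : 1 ≤ q)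
    (hτ0 : 0 ≤ τ0) (hτk : τ0 ≤ K) (hR0 : 0 ≤ R) (hRD : R ≤ K * D)
    (hD0 : 0 ≤ D) (hD1 : D ≤ 1) :
    2 * (β * (Real.sqrt τ0 * Real.sqrt R)) + β * (Real.sqrt R * Real.sqrt (q * R - R))
      ≤ 2 * β * K * Real.sqrt (q + 1) * Real.sqrt D := by
  set a := Real.sqrt τ0 with ha
  set b := Real.sqrt R with hb
  set c := Real.sqrt D with hc
  set sK := Real.sqrt K with hsK
  set x := Real.sqrt (q - 1) with hx
  set y := Real.sqrt (q + 1) with hy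
  have ha0 : 0 ≤ a := Real.sqrt_nonneg _
  have hb0 : 0 ≤ b := Real.sqrt_nonneg _
  have hc0 : 0 ≤ c := Real.sqrt_nonneg _
  have hsK0 : 0 ≤ sK := Real.sqrt_nonneg _
  have hx0 : 0 ≤ x := Real.sqrt_nonneg _
  have hy0 : 0 ≤ y := Real.sqrt_nonneg _
  have hsK2 : sK ^ 2 = K := Real.sq_sqrt hK.le
  have hc2 : c ^ 2 = D := Real.sq_sqrt hD0
  have hb2 : b ^ 2 = R := Real.sq_sqrt hR0
  have hx2 : x ^ 2 = q - 1 := Real.sq_sqrt (by linarith)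
  have hy2 : y ^ 2 = q + 1 := Real.sq_sqrt (by linarith)
  have hsqrtqR : Real.sqrt (q * R - R) = x * b := by
    rw [show q * R - R = (q - 1) * R by ring, Real.sqrt_mul (by linarith)]
  have hab : a ≤ sK := Real.sqrt_le_sqrt hτk
  have hbKc : b ≤ sK * c := by
    rw [hb, hsK, hc, ← Real.sqrt_mul hK.le]
    exact Real.sqrt_le_sqrt hRD
  have hc1 : c ≤ 1 := by
    rw [hc, show (1:ℝ) = Real.sqrt 1 by simp]
    exact Real.sqrt_le_sqrt hD1
  have hxy : 2 + x ≤ 2 * y := by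
    have hsq : (2 + x) ^ 2 ≤ 4 * (q + 1) := by nlinarith [sq_nonneg (3 * x - 2)]
    have h4 : Real.sqrt 4 = 2 := by
      rw [show (4:ℝ) = 2 ^ 2 by norm_num, Real.sqrt_sq (by norm_num)]
    calc 2 + x = Real.sqrt ((2 + x) ^ 2) := (Real.sqrt_sq (by linarith)).symm
      _ ≤ Real.sqrt (4 * (q + 1)) := Real.sqrt_le_sqrt hsq
      _ = 2 * y := by rw [Real.sqrt_mul (by norm_num), h4]
  -- main chain
  have h1 : a * b ≤ sK * (sK * c) := by
    calc a * b ≤ sK * b := mul_le_mul_of_nonneg_right hab hb0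
      _ ≤ sK * (sK * c) := mul_le_mul_of_nonneg_left hbKc hsK0
  have h2 : b * (x * b) = x * b ^ 2 := by ring
  have h3 : x * b ^ 2 ≤ x * (K * c) := by
    refine mul_le_mul_of_nonneg_left ?_ hx0
    calc b ^ 2 = R := hb2
      _ ≤ K * D := hRD
      _ = K * c ^ 2 := by rw [hc2]
      _ ≤ K * c := by
          refine mul_le_mul_of_nonneg_left ?_ hK.le
          nlinarith
  rw [hsqrtqR]
  have e1 : sK * (sK * c) = K * c := by rw [← hsK2]; ring
  have h1' : β * (a * b) ≤ β * (K * c) :=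
    mul_le_mul_of_nonneg_left (e1 ▸ h1) hβ
  have h3' : β * (x * b ^ 2) ≤ β * (x * (K * c)) := mul_le_mul_of_nonneg_left h3 hβ
  have hKey : 2 * (β * (a * b)) + β * (b * (x * b)) ≤ β * (K * c) * (2 + x) := by
    calc 2 * (β * (a * b)) + β * (b * (x * b))
        = 2 * (β * (a * b)) + β * (x * b ^ 2) := by ring
      _ ≤ 2 * (β * (K * c)) + β * (x * (K * c)) := by linarith
      _ = β * (K * c) * (2 + x) := by ring
  calc 2 * (β * (a * b)) + β * (b * (x * b)) ≤ β * (K * c) * (2 + x) := hKey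
    _ ≤ β * (K * c) * (2 * y) := by
        refine mul_le_mul_of_nonneg_left hxy ?_
        exact mul_nonneg hβ (mul_nonneg hK.le hc0)
    _ = 2 * β * K * y * c := by ring


/-- Bound on the centered-random-part contribution: if `V` is partitioned into blocks
`S, Λ_1, …, Λ_r, Π_1, …, Π_t`, `B` is symmetric with spectral norm at most `β` and
vanishes on pairs lying in a common block, then
`∑_{i,j} B_{ij}⟪X_i,X_j⟫ ≤ 2βk·√(r+t+1)·√(1 − E_{i∼S}‖X_i‖²)`. -/
theorem centered_contribution
    (n k r t : ℕ) (hk : 0 < k) (hkn : k ≤ n)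
    (Adj : Fin n → Fin n → Prop) (hAdjSymm : ∀ i j, Adj i j → Adj j i)
    (S : Finset (Fin n)) (hS : S.card = k)
    (L : Fin r → Finset (Fin n)) (P : Fin t → Finset (Fin n))
    (hcover : ∀ v, v ∈ S ∨ (∃ ℓ, v ∈ L ℓ) ∨ (∃ ℓ, v ∈ P ℓ))
    (hSL : ∀ ℓ, Disjoint S (L ℓ)) (hSP : ∀ ℓ, Disjoint S (P ℓ))
    (hLL : ∀ ℓ ℓ', ℓ ≠ ℓ' → Disjoint (L ℓ) (L ℓ'))
    (hPP : ∀ ℓ ℓ', ℓ ≠ ℓ' → Disjoint (P ℓ) (P ℓ'))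
    (hLP : ∀ ℓ ℓ', Disjoint (L ℓ) (P ℓ'))
    (β : ℝ) (hβ : 0 ≤ β)
    (B : Matrix (Fin n) (Fin n) ℝ) (hBsymm : B.IsSymm)
    (hBnorm : ‖Matrix.toEuclideanCLM (𝕜 := ℝ) B‖ ≤ β)
    (hBzero : ∀ i j, ((i ∈ S ∧ j ∈ S) ∨ (∃ ℓ, i ∈ L ℓ ∧ j ∈ L ℓ) ∨
      (∃ ℓ, i ∈ P ℓ ∧ j ∈ P ℓ)) → B i j = 0)
    (X : Fin n → EuclideanSpace ℝ (Fin (n + 1)))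
    (I : EuclideanSpace ℝ (Fin (n + 1)))
    (hfeas : SDPFeasible k Adj X I) :
    ∑ i, ∑ j, B i j * ⟪X i, X j⟫ ≤
      2 * β * (k : ℝ) * Real.sqrt ((r : ℝ) + (t : ℝ) + 1) *
        Real.sqrt (1 - (1 / (k : ℝ)) * ∑ i ∈ S, ⟪X i, X i⟫) := by
    classical
  obtain ⟨hc1, hc2, hc3, hc4, hc5, hc6, hc7⟩ := hfeas
  have hw0 : ∀ i : Fin n, 0 ≤ ⟪X i, X i⟫ := fun i => real_inner_self_nonneg
  have hoff : ∀ i j, 0 ≤ ⟪X i, X j⟫ := by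
    intro i j
    by_cases h : i = j
    · subst h; exact hw0 i
    · exact (hc4 i j h).1
  have hTk : ∑ i, ⟪X i, X i⟫ ≤ (k : ℝ) := by
    exact hc1.le
  set τ0 : ℝ := ∑ i ∈ S, ⟪X i, X i⟫ with hτ0def
  set R : ℝ := ∑ i ∈ Sᶜ, ⟪X i, X i⟫ with hRdef
  have hτ0nn : 0 ≤ τ0 := Finset.sum_nonneg fun i _ => hw0 i
  have hRnn : 0 ≤ R := Finset.sum_nonneg fun i _ => hw0 i
  have hτ0R : τ0 + R = ∑ i, ⟪X i, X i⟫ :=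
    Finset.sum_add_sum_compl S (fun i => ⟪X i, X i⟫)
  have hτ0k : τ0 ≤ (k : ℝ) := by
    calc τ0 ≤ ∑ i ∈ S, (1 : ℝ) := Finset.sum_le_sum fun i _ => hc5 i
      _ = (k : ℝ) := by rw [Finset.sum_const, hS]; simp
  have hRk : R ≤ (k : ℝ) - τ0 := by linarith
  -- the blocks
  set C : Fin r ⊕ Fin t → Finset (Fin n) := Sum.elim L P with hC
  have hCS : ∀ a, Disjoint S (C a) := by
    rintro (ℓ | ℓ)
    · exact hSL ℓ
    · exact hSP ℓ
  have hCdisj : ∀ a ∈ (Finset.univ : Finset (Fin r ⊕ Fin t)),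
      ∀ b ∈ (Finset.univ : Finset (Fin r ⊕ Fin t)), a ≠ b → Disjoint (C a) (C b) := by
    rintro (ℓ | ℓ) - (ℓ' | ℓ') - hne
    · exact hLL ℓ ℓ' (by simpa using hne)
    · exact hLP ℓ ℓ'
    · exact (hLP ℓ' ℓ).symm
    · exact hPP ℓ ℓ' (by simpa using hne)
  have hQ : Sᶜ = (Finset.univ : Finset (Fin r ⊕ Fin t)).biUnion C := by
    ext v
    simp only [Finset.mem_compl, Finset.mem_biUnion, Finset.mem_univ, true_and]
    constructor
    · intro hv
      rcases hcover v with h | ⟨ℓ, h⟩ | ⟨ℓ, h⟩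
      · exact absurd h hv
      · exact ⟨Sum.inl ℓ, h⟩
      · exact ⟨Sum.inr ℓ, h⟩
    · rintro ⟨a, ha⟩
      exact fun hv => (Finset.disjoint_left.mp (hCS a)) hv ha
  have hsumQ : ∀ g : Fin n → ℝ, ∑ i ∈ Sᶜ, g i = ∑ a, ∑ i ∈ C a, g i := by
    intro g
    rw [hQ]
    exact Finset.sum_biUnion hCdisj
  have hCsubQ : ∀ a, C a ⊆ Sᶜ := by
    intro a v hv
    rw [Finset.mem_compl]
    exact fun hvS => (Finset.disjoint_left.mp (hCS a)) hvS hv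
  set τ : Fin r ⊕ Fin t → ℝ := fun a => ∑ i ∈ C a, ⟪X i, X i⟫ with hτ
  have hτnn : ∀ a, 0 ≤ τ a := fun a => Finset.sum_nonneg fun i _ => hw0 i
  have hτsum : ∑ a, τ a = R := (hsumQ (fun i => ⟪X i, X i⟫)).symm
  have hτleR : ∀ a, τ a ≤ R :=
    fun a => Finset.sum_le_sum_of_subset_of_nonneg (hCsubQ a) fun i _ _ => hw0 i
  have hτsd : ∀ a, ∑ i ∈ Sᶜ \ C a, ⟪X i, X i⟫ = R - τ a := by
    intro a
    have := Finset.sum_sdiff (f := fun i => ⟪X i, X i⟫) (hCsubQ a)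
    have hτa : τ a = ∑ i ∈ C a, ⟪X i, X i⟫ := rfl
    rw [hRdef, hτa]
    linarith
  have hCzero : ∀ a, ∀ i ∈ C a, ∀ j ∈ C a, B i j = 0 := by
    rintro (ℓ | ℓ) i hi j hj
    · exact hBzero i j (Or.inr (Or.inl ⟨ℓ, hi, hj⟩))
    · exact hBzero i j (Or.inr (Or.inr ⟨ℓ, hi, hj⟩))
  -- splitting the total sum
  have hsplit : ∑ i, ∑ j, B i j * ⟪X i, X j⟫ =
      (∑ i ∈ S, ∑ j ∈ S, B i j * ⟪X i, X j⟫ + ∑ i ∈ S, ∑ j ∈ Sᶜ, B i j * ⟪X i, X j⟫) +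
      (∑ i ∈ Sᶜ, ∑ j ∈ S, B i j * ⟪X i, X j⟫ + ∑ i ∈ Sᶜ, ∑ j ∈ Sᶜ, B i j * ⟪X i, X j⟫) := by
    rw [← Finset.sum_add_sum_compl S (fun i => ∑ j, B i j * ⟪X i, X j⟫)]
    congr 1
    · rw [← Finset.sum_add_distrib]
      exact Finset.sum_congr rfl fun i _ =>
        (Finset.sum_add_sum_compl S (fun j => B i j * ⟪X i, X j⟫)).symm
    · rw [← Finset.sum_add_distrib]
      exact Finset.sum_congr rfl fun i _ =>
        (Finset.sum_add_sum_compl S (fun j => B i j * ⟪X i, X j⟫)).symm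
  have hFSS : ∑ i ∈ S, ∑ j ∈ S, B i j * ⟪X i, X j⟫ = 0 :=
    Finset.sum_eq_zero fun i hi => Finset.sum_eq_zero fun j hj => by
      rw [hBzero i j (Or.inl ⟨hi, hj⟩), zero_mul]
  -- case r + t = 0
  rcases Nat.eq_zero_or_pos (r + t) with hrt | hrt
  · have hempty : Sᶜ = (∅ : Finset (Fin n)) := by
      rw [hQ]
      have hr : r = 0 := by omega
      have ht : t = 0 := by omega
      subst hr; subst ht
      have : IsEmpty (Fin 0 ⊕ Fin 0) := by infer_instance
      simp
    have htotal : ∑ i, ∑ j, B i j * ⟪X i, X j⟫ = 0 := by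
      rw [hsplit, hFSS, hempty]
      simp
    rw [htotal]
    positivity
  -- main case
  have hq1 : (1 : ℝ) ≤ (r : ℝ) + (t : ℝ) := by
    have : (1 : ℕ) ≤ r + t := hrt
    exact_mod_cast this
  -- bounds on the three pieces
  have hFSQ : ∑ i ∈ S, ∑ j ∈ Sᶜ, B i j * ⟪X i, X j⟫ ≤
      β * (Real.sqrt τ0 * Real.sqrt R) := specBound β hβ B hBnorm X S Sᶜ
  have hFQS : ∑ i ∈ Sᶜ, ∑ j ∈ S, B i j * ⟪X i, X j⟫ ≤
      β * (Real.sqrt τ0 * Real.sqrt R) := by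
    have := specBound β hβ B hBnorm X Sᶜ S
    calc ∑ i ∈ Sᶜ, ∑ j ∈ S, B i j * ⟪X i, X j⟫
        ≤ β * (Real.sqrt R * Real.sqrt τ0) := this
      _ = β * (Real.sqrt τ0 * Real.sqrt R) := by ring
  have hQQa : ∀ a, ∑ i ∈ C a, ∑ j ∈ Sᶜ, B i j * ⟪X i, X j⟫ =
      ∑ i ∈ C a, ∑ j ∈ Sᶜ \ C a, B i j * ⟪X i, X j⟫ := by
    intro a
    refine Finset.sum_congr rfl fun i hi => ?_
    have h0 : ∑ j ∈ C a, B i j * ⟪X i, X j⟫ = 0 :=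
      Finset.sum_eq_zero fun j hj => by rw [hCzero a i hi j hj, zero_mul]
    have := Finset.sum_sdiff (f := fun j => B i j * ⟪X i, X j⟫) (hCsubQ a)
    linarith
  have hQQb : ∀ a, ∑ i ∈ C a, ∑ j ∈ Sᶜ \ C a, B i j * ⟪X i, X j⟫ ≤
      β * (Real.sqrt (τ a) * Real.sqrt (R - τ a)) := by
    intro a
    have h := specBound β hβ B hBnorm X (C a) (Sᶜ \ C a)
    rw [hτsd a] at h
    exact h
  have hFQQ : ∑ i ∈ Sᶜ, ∑ j ∈ Sᶜ, B i j * ⟪X i, X j⟫ ≤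
      β * (Real.sqrt R * Real.sqrt (((r : ℝ) + (t : ℝ)) * R - R)) := by
    have hstep : ∑ i ∈ Sᶜ, ∑ j ∈ Sᶜ, B i j * ⟪X i, X j⟫ ≤
        ∑ a, β * (Real.sqrt (τ a) * Real.sqrt (R - τ a)) := by
      rw [hsumQ (fun i => ∑ j ∈ Sᶜ, B i j * ⟪X i, X j⟫)]
      refine Finset.sum_le_sum fun a _ => ?_
      rw [hQQa a]
      exact hQQb a
    have hcs : ∑ a, Real.sqrt (τ a) * Real.sqrt (R - τ a) ≤
        Real.sqrt (∑ a, τ a) * Real.sqrt (∑ a, (R - τ a)) :=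
      csSum Finset.univ τ (fun a => R - τ a) (fun a _ => hτnn a)
        (fun a _ => by show (0:ℝ) ≤ R - τ a; linarith [hτleR a])
    have hcard : (Finset.univ : Finset (Fin r ⊕ Fin t)).card = r + t := by
      simp [Fintype.card_sum]
    have hsub : ∑ a, (R - τ a) = ((r : ℝ) + (t : ℝ)) * R - R := by
      rw [Finset.sum_sub_distrib, hτsum, Finset.sum_const, hcard]
      push_cast
      ring
    calc ∑ i ∈ Sᶜ, ∑ j ∈ Sᶜ, B i j * ⟪X i, X j⟫
        ≤ ∑ a, β * (Real.sqrt (τ a) * Real.sqrt (R - τ a)) := hstep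
      _ = β * ∑ a, Real.sqrt (τ a) * Real.sqrt (R - τ a) := by rw [Finset.mul_sum]
      _ ≤ β * (Real.sqrt (∑ a, τ a) * Real.sqrt (∑ a, (R - τ a))) :=
          mul_le_mul_of_nonneg_left hcs hβ
      _ = β * (Real.sqrt R * Real.sqrt (((r : ℝ) + (t : ℝ)) * R - R)) := by
          rw [hτsum, hsub]
  -- final arithmetic
  have hkpos : (0 : ℝ) < (k : ℝ) := by exact_mod_cast hk
  have hkne : (k : ℝ) ≠ 0 := ne_of_gt hkpos
  set D : ℝ := 1 - (1 / (k : ℝ)) * τ0 with hDdef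
  have hKD : (k : ℝ) * D = (k : ℝ) - τ0 := by
    rw [hDdef]; field_simp
  have hD0 : 0 ≤ D := by
    rw [hDdef]
    rw [div_mul_eq_mul_div, one_mul, sub_nonneg, div_le_one hkpos] at *
    exact hτ0k
  have hD1 : D ≤ 1 := by
    rw [hDdef]
    have : 0 ≤ (1 / (k : ℝ)) * τ0 := by positivity
    linarith
  have hfin := finalArith β (k : ℝ) D R τ0 ((r : ℝ) + (t : ℝ)) hβ hkpos hq1
    hτ0nn hτ0k hRnn (by linarith) hD0 hD1
  calc ∑ i, ∑ j, B i j * ⟪X i, X j⟫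
      = (∑ i ∈ S, ∑ j ∈ S, B i j * ⟪X i, X j⟫ + ∑ i ∈ S, ∑ j ∈ Sᶜ, B i j * ⟪X i, X j⟫) +
        (∑ i ∈ Sᶜ, ∑ j ∈ S, B i j * ⟪X i, X j⟫ +
          ∑ i ∈ Sᶜ, ∑ j ∈ Sᶜ, B i j * ⟪X i, X j⟫) := hsplit
    _ ≤ 2 * (β * (Real.sqrt τ0 * Real.sqrt R)) +
        β * (Real.sqrt R * Real.sqrt (((r : ℝ) + (t : ℝ)) * R - R)) := by
        rw [hFSS]
        linarith
    _ ≤ 2 * β * (k : ℝ) * Real.sqrt ((r : ℝ) + (t : ℝ) + 1) * Real.sqrt D := hfin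
    _ = 2 * β * (k : ℝ) * Real.sqrt ((r : ℝ) + (t : ℝ) + 1) *
        Real.sqrt (1 - (1 / (k : ℝ)) * ∑ i ∈ S, ⟪X i, X i⟫) := by rw [hDdef]
end

section
/- For any weighted graph H = (V', E', w') with nonnegative edge weights, the optimal value of the densest-subgraph LP equals the maximum subgraph density: sup over LP-feasible (x, y) of ∑_{{i,j}∈E'} w'_{ij} x_{ij} = max over nonempty V'' ⊆ V' of (∑_{{i,j}∈E', i,j∈V''} w'_{ij}) / |V''|. -/
open Finset

/-!
Spreading mass `1 / |S|` uniformly over `S` and its internal edges shows that every density is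
an LP value. Conversely, let `ρ` be the maximum density and `(x, y)` feasible. As `w ≥ 0`, the
objective is at most `∑_{i<j} w i j * min (y i) (y j)`. Peeling off the lowest layer of `y`,
`y = y' + t • 1_S` with `t` the minimum of `y` on a set `S` off which `y` vanishes and `y'`
vanishing off `S` minus a minimiser, changes this sum by `t * e(S) ≤ t * ρ * |S|` (with `e(S)`
the weight induced by `S`) and `∑ i, y i` by `t * |S|`. By induction on `S` the sum is at most
`ρ * ∑ i, y i ≤ ρ`.
-/

lemma min_add_ite_add_ite {α : Type*} [AddCommMonoid α] [LinearOrder α] [IsOrderedAddMonoid α]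
    {p q : Prop} [Decidable p] [Decidable q] {a b t : α} (ha : 0 ≤ a) (hb : 0 ≤ b)
    (hpa : ¬p → a = 0) (hqb : ¬q → b = 0) (ht : 0 ≤ t) :
    min (a + if p then t else 0) (b + if q then t else 0) = min a b + if p ∧ q then t else 0 := by
  by_cases hp : p <;> by_cases hq : q
  · simp [hp, hq, min_add_add_right]
  · simpa [hp, hq, hqb hq, min_eq_right (add_nonneg ha ht)] using ha
  · simpa [hp, hq, hpa hp, min_eq_left (add_nonneg hb ht)] using hb
  · simp [hp, hq, hpa hp, hqb hq]

namespace DensestSubgraph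

variable {ι : Type*} [Fintype ι] [LinearOrder ι]

def inducedWeight (w : ι → ι → ℝ) (S : Finset ι) : ℝ :=
  ∑ i ∈ S, ∑ j ∈ S.filter (fun j => i < j), w i j

def lpObjective (w : ι → ι → ℝ) (x : ι → ι → ℝ) : ℝ :=
  ∑ i, ∑ j ∈ univ.filter (fun j => i < j), w i j * x i j

def lpValues (w : ι → ι → ℝ) : Set ℝ :=
  {v | ∃ (x : ι → ι → ℝ) (y : ι → ℝ),
    (∀ i j, i < j → 0 ≤ x i j) ∧ (∀ i, 0 ≤ y i) ∧
    (∀ i j, i < j → x i j ≤ y i) ∧ (∀ i j, i < j → x i j ≤ y j) ∧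
    (∑ i, y i ≤ 1) ∧ v = lpObjective w x}

def densities (w : ι → ι → ℝ) : Set ℝ :=
  {v | ∃ S : Finset ι, S.Nonempty ∧ v = inducedWeight w S / #S}

variable (w : ι → ι → ℝ)

lemma lpObjective_add (x x' : ι → ι → ℝ) :
    lpObjective w (x + x') = lpObjective w x + lpObjective w x' := by
  simp only [lpObjective, Pi.add_apply, mul_add, sum_add_distrib]

lemma lpObjective_mono (hw : ∀ i j, 0 ≤ w i j) {x x' : ι → ι → ℝ}
    (h : ∀ i j, i < j → x i j ≤ x' i j) : lpObjective w x ≤ lpObjective w x' :=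
  sum_le_sum fun i _ => sum_le_sum fun j hj =>
    mul_le_mul_of_nonneg_left (h i j (mem_filter.1 hj).2) (hw i j)

lemma lpObjective_ite_mem (S : Finset ι) (c : ℝ) :
    lpObjective w (fun i j => if i ∈ S ∧ j ∈ S then c else 0) = c * inducedWeight w S := by
  simp only [lpObjective, inducedWeight, mul_sum, mul_ite, mul_zero, ite_and]
  rw [← sum_subset (subset_univ S) fun i _ hi => by simp [hi]]
  refine sum_congr rfl fun i hi => ?_
  rw [sum_filter, sum_filter, ← sum_subset (subset_univ S) fun j _ hj => by simp [hj]]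
  refine sum_congr rfl fun j hj => ?_
  simp [hi, hj, mul_comm]

lemma lpObjective_min_add_ite_mem {y : ι → ℝ} (hy : 0 ≤ y) {S : Finset ι}
    (hyS : ∀ i ∉ S, y i = 0) {t : ℝ} (ht : 0 ≤ t) :
    lpObjective w
        (fun i j => min (y i + if i ∈ S then t else 0) (y j + if j ∈ S then t else 0)) =
      lpObjective w (fun i j => min (y i) (y j)) + t * inducedWeight w S := by
  simp only [min_add_ite_add_ite (hy _) (hy _) (hyS _) (hyS _) ht]
  exact (lpObjective_add w _ _).trans (congrArg _ (lpObjective_ite_mem w S t))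

theorem lpObjective_min_le {ρ : ℝ} (hρ : ∀ S, inducedWeight w S ≤ ρ * #S) {y : ι → ℝ}
    (hy : 0 ≤ y) : lpObjective w (fun i j => min (y i) (y j)) ≤ ρ * ∑ i, y i := by
  suffices ∀ (S : Finset ι) (y : ι → ℝ), 0 ≤ y → (∀ i ∉ S, y i = 0) →
      lpObjective w (fun i j => min (y i) (y j)) ≤ ρ * ∑ i, y i from
    this univ y hy fun i hi => absurd (mem_univ i) hi
  intro S
  induction S using Finset.strongInduction with
  | H S ih =>
  intro y hy hyS
  obtain rfl | hS := S.eq_empty_or_nonempty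
  · obtain rfl : y = 0 := funext fun i => hyS i (notMem_empty i)
    simp [lpObjective]
  obtain ⟨i₀, hi₀, hmin⟩ := S.exists_min_image y hS
  set t := y i₀ with ht
  clear_value t
  obtain ⟨y', hy'i₀, rfl⟩ :
      ∃ y' : ι → ℝ, y' i₀ = 0 ∧ y = fun i => y' i + if i ∈ S then t else 0 :=
    ⟨fun i => y i - if i ∈ S then t else 0, by simp [hi₀, ht], by simp⟩
  have ht0 : 0 ≤ t := ht ▸ hy i₀
  have hy' : 0 ≤ y' := fun i => by
    by_cases hi : i ∈ S
    · simpa [hi] using hmin i hi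
    · simpa [hi] using hy i
  have hy'S : ∀ i ∉ S.erase i₀, y' i = 0 := fun i hi => by
    by_cases hiS : i ∈ S
    · obtain rfl : i = i₀ := by simpa [hiS] using hi
      exact hy'i₀
    · simpa [hiS] using hyS i hiS
  calc lpObjective w
        (fun i j => min (y' i + if i ∈ S then t else 0) (y' j + if j ∈ S then t else 0))
      = lpObjective w (fun i j => min (y' i) (y' j)) + t * inducedWeight w S :=
        lpObjective_min_add_ite_mem w hy' (fun i hi => hy'S i fun h => hi (mem_of_mem_erase h)) ht0
    _ ≤ ρ * ∑ i, y' i + t * (ρ * #S) :=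
        add_le_add (ih _ (erase_ssubset hi₀) y' hy' hy'S) (mul_le_mul_of_nonneg_left (hρ S) ht0)
    _ = ρ * ∑ i, (y' i + if i ∈ S then t else 0) := by
        rw [sum_add_distrib, sum_ite_mem, univ_inter, sum_const, nsmul_eq_mul]
        ring

theorem le_of_mem_lpValues (hw : ∀ i j, 0 ≤ w i j) {ρ : ℝ} (hρ0 : 0 ≤ ρ)
    (hρ : ∀ S, inducedWeight w S ≤ ρ * #S) {v : ℝ} (hv : v ∈ lpValues w) : v ≤ ρ := by
  obtain ⟨x, y, -, hy, hxi, hxj, hsum, rfl⟩ := hv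
  calc lpObjective w x
      ≤ lpObjective w (fun i j => min (y i) (y j)) :=
        lpObjective_mono w hw fun i j hij => le_min (hxi i j hij) (hxj i j hij)
    _ ≤ ρ * ∑ i, y i := lpObjective_min_le w hρ hy
    _ ≤ ρ := mul_le_of_le_one_right hρ0 hsum

theorem densities_subset_lpValues : densities w ⊆ lpValues w := by
  rintro v ⟨S, hS, rfl⟩
  have hcard : (0 : ℝ) < #S := by exact_mod_cast hS.card_pos
  refine ⟨fun i j => if i ∈ S ∧ j ∈ S then (#S : ℝ)⁻¹ else 0,
    fun i => if i ∈ S then (#S : ℝ)⁻¹ else 0, fun i j _ => by positivity,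
    fun i => by positivity, fun i j _ => ?_, fun i j _ => ?_, ?_, ?_⟩
  · dsimp only
    split_ifs <;> simp_all
  · dsimp only
    split_ifs <;> simp_all
  · rw [sum_ite_mem, univ_inter, sum_const, nsmul_eq_mul, mul_inv_cancel₀ hcard.ne']
  · rw [lpObjective_ite_mem, div_eq_inv_mul]

lemma densities_finite : (densities w).Finite :=
  (Set.finite_range fun S : Finset ι => inducedWeight w S / #S).subset
    fun _ ⟨S, _, hv⟩ => ⟨S, hv.symm⟩

theorem sSup_lpValues_eq_sSup_densities [Nonempty ι] (hw : ∀ i j, 0 ≤ w i j) :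
    sSup (lpValues w) = sSup (densities w) := by
  have hbdd := (densities_finite w).bddAbove
  have hne : (densities w).Nonempty := ⟨_, univ, univ_nonempty, rfl⟩
  have hρ0 : 0 ≤ sSup (densities w) :=
    le_csSup_of_le hbdd ⟨univ, univ_nonempty, rfl⟩ <| div_nonneg
      (sum_nonneg fun i _ => sum_nonneg fun j _ => hw i j) (Nat.cast_nonneg _)
  have hρ : ∀ S, inducedWeight w S ≤ sSup (densities w) * #S := by
    intro S
    obtain rfl | hS := S.eq_empty_or_nonempty
    · simp [inducedWeight]
    exact (div_le_iff₀ (by exact_mod_cast hS.card_pos)).1 (le_csSup hbdd ⟨S, hS, rfl⟩)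
  exact le_antisymm
    (csSup_le (hne.mono (densities_subset_lpValues w)) fun v => le_of_mem_lpValues w hw hρ0 hρ)
    (csSup_le_csSup ⟨_, fun v => le_of_mem_lpValues w hw hρ0 hρ⟩ hne
      (densities_subset_lpValues w))

end DensestSubgraph

/-- Charikar's LP characterization of the densest subgraph: for any weighted graph on
`m` vertices with nonnegative edge weights `w` (edges being the pairs `i < j`), the
supremum of the densest-subgraph LP objective over feasible `(x, y)` equals the maximum
density `(∑_{i,j∈V'', i<j} w i j) / |V''|` over nonempty vertex subsets `V''`. -/
theorem charikar_lp_eq_max_density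
    (m : ℕ) (hm : 0 < m)
    (w : Fin m → Fin m → ℝ) (hw : ∀ i j, 0 ≤ w i j) :
    sSup {v : ℝ | ∃ (x : Fin m → Fin m → ℝ) (y : Fin m → ℝ),
        (∀ i j, i < j → 0 ≤ x i j) ∧ (∀ i, 0 ≤ y i) ∧
        (∀ i j, i < j → x i j ≤ y i) ∧ (∀ i j, i < j → x i j ≤ y j) ∧
        (∑ i, y i ≤ 1) ∧
        v = ∑ i, ∑ j ∈ Finset.univ.filter (fun j => i < j), w i j * x i j} =
    sSup {v : ℝ | ∃ V'' : Finset (Fin m), V''.Nonempty ∧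
        v = (∑ i ∈ V'', ∑ j ∈ V''.filter (fun j => i < j), w i j) / (V''.card : ℝ)} := by
  have : Nonempty (Fin m) := ⟨⟨0, hm⟩⟩
  exact DensestSubgraph.sSup_lpValues_eq_sSup_densities w hw
end

section
/- Let {X_1,…,X_n, I} be an SDP-feasible solution and let Π ⊆ V with ∑_{i∈Π}‖X_i‖² > 0. Then setting x_{ij} := ⟨X_i,X_j⟩ / (∑_{i∈Π}‖X_i‖²) for each edge {i,j} of the induced subgraph G[Π] and y_i := ‖X_i‖² / (∑_{i∈Π}‖X_i‖²) for each i ∈ Π yields a feasible solution of the densest-subgraph LP for the weighted graph G[Π]. -/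
open scoped RealInnerProductSpace BigOperators
open Finset

/-- Scaling the SDP solution yields a feasible solution of the densest-subgraph LP for
the induced subgraph `G[Π]`: with `Z = ∑_{i∈Π}‖X_i‖² > 0`, the assignment
`x_{ij} = ⟪X_i,X_j⟫/Z` (for edges of `G[Π]`) and `y_i = ‖X_i‖²/Z` satisfies all LP
constraints. -/
theorem lp_feasibility_of_sdp
    (n k : ℕ) (hk : 0 < k) (hkn : k ≤ n)
    (Adj : Fin n → Fin n → Prop) (hAdjSymm : ∀ i j, Adj i j → Adj j i)
    (X : Fin n → EuclideanSpace ℝ (Fin (n + 1)))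
    (I : EuclideanSpace ℝ (Fin (n + 1)))
    (hfeas : SDPFeasible k Adj X I)
    (Pi : Finset (Fin n))
    (hpos : 0 < ∑ i ∈ Pi, ⟪X i, X i⟫) :
    (∀ i ∈ Pi, 0 ≤ ⟪X i, X i⟫ / (∑ i ∈ Pi, ⟪X i, X i⟫)) ∧
    (∀ i ∈ Pi, ∀ j ∈ Pi, i ≠ j → Adj i j →
      0 ≤ ⟪X i, X j⟫ / (∑ i ∈ Pi, ⟪X i, X i⟫) ∧
      ⟪X i, X j⟫ / (∑ i ∈ Pi, ⟪X i, X i⟫) ≤ ⟪X i, X i⟫ / (∑ i ∈ Pi, ⟪X i, X i⟫) ∧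
      ⟪X i, X j⟫ / (∑ i ∈ Pi, ⟪X i, X i⟫) ≤ ⟪X j, X j⟫ / (∑ i ∈ Pi, ⟪X i, X i⟫)) ∧
    (∑ i ∈ Pi, ⟪X i, X i⟫ / (∑ i ∈ Pi, ⟪X i, X i⟫) ≤ 1) := by
  
  obtain ⟨h1,h2,h3,h4,h5,h6,h7⟩ := hfeas
  have hZ := hpos
  refine ⟨?_, ?_, ?_⟩
  · intro i _
    exact div_nonneg real_inner_self_nonneg hZ.le
  · intro i _ j _ hij _
    refine ⟨div_nonneg (h4 i j hij).1 hZ.le, ?_, ?_⟩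
    · gcongr
      exact (h4 i j hij).2
    · gcongr
      rw [real_inner_comm]
      exact (h4 j i hij.symm).2
  · rw [← Finset.sum_div, div_self hZ.ne']
end

section
/- Let Π ⊆ V and γ ≥ 0, and suppose that for every nonempty subset W ⊆ Π the total weight of edges of G with both endpoints in W is at most γk·|W| (i.e., the maximum average degree of any subgraph of G[Π] is at most 2γk, equivalently the maximum density is at most γk). Then for every SDP-feasible solution {X_1,…,X_n, I}, one has ∑_{i,j∈Π} A_{ij}⟨X_i,X_j⟩ ≤ 2γk·∑_{i∈Π}‖X_i‖². -/
open scoped RealInnerProductSpace BigOperators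
open Finset


lemma min_shift (m a b : ℝ) : min a b = m + min (a - m) (b - m) := by
  rcases le_total a b with h | h
  · rw [min_eq_left h, min_eq_left (by linarith)]; ring
  · rw [min_eq_right h, min_eq_right (by linarith)]; ring

lemma aux_min_density {n : ℕ} (A : Fin n → Fin n → ℝ) (hAnn : ∀ i j, 0 ≤ A i j)
    (c : ℝ) :
    ∀ S : Finset (Fin n),
      (∀ W ⊆ S, W.Nonempty → ∑ i ∈ W, ∑ j ∈ W, A i j ≤ c * (W.card : ℝ)) →
      ∀ x : Fin n → ℝ, (∀ i ∈ S, 0 ≤ x i) →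
      ∑ i ∈ S, ∑ j ∈ S, A i j * min (x i) (x j) ≤ c * ∑ i ∈ S, x i := by
  intro S
  induction S using Finset.strongInduction with
  | _ S ih =>
    intro hdens x hx
    rcases S.eq_empty_or_nonempty with rfl | hS
    · simp
    obtain ⟨i₀, hi₀, hmin⟩ := S.exists_min_image x hS
    set m := x i₀ with hm
    have hm0 : 0 ≤ m := hx i₀ hi₀
    set S' : Finset (Fin n) := S.erase i₀ with hS'
    have hsub : S' ⊂ S := Finset.erase_ssubset hi₀
    have hx' : ∀ i ∈ S', 0 ≤ x i - m := fun i hi => by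
      have := hmin i (Finset.mem_of_mem_erase hi); linarith
    have key : ∑ i ∈ S, ∑ j ∈ S, A i j * min (x i) (x j)
        = m * (∑ i ∈ S, ∑ j ∈ S, A i j)
          + ∑ i ∈ S, ∑ j ∈ S, A i j * min (x i - m) (x j - m) := by
      rw [Finset.mul_sum, ← Finset.sum_add_distrib]
      refine Finset.sum_congr rfl fun i hi => ?_
      rw [Finset.mul_sum, ← Finset.sum_add_distrib]
      refine Finset.sum_congr rfl fun j hj => ?_
      rw [min_shift m (x i) (x j)]; ring
    have hzero : ∀ i ∈ S, ∀ j ∈ S, (i = i₀ ∨ j = i₀) →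
        A i j * min (x i - m) (x j - m) = 0 := by
      rintro i hi j hj (rfl | rfl)
      · have h0 : x i - m = 0 := by simp [hm]
        have h1 : 0 ≤ x j - m := by have := hmin j hj; linarith
        have : min (x i - m) (x j - m) = 0 := by rw [h0, min_eq_left h1]
        rw [this, mul_zero]
      · have h0 : x j - m = 0 := by simp [hm]
        have h1 : 0 ≤ x i - m := by have := hmin i hi; linarith
        have : min (x i - m) (x j - m) = 0 := by rw [h0, min_eq_right h1]
        rw [this, mul_zero]
    have hdrop : ∑ i ∈ S, ∑ j ∈ S, A i j * min (x i - m) (x j - m)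
        = ∑ i ∈ S', ∑ j ∈ S', A i j * min (x i - m) (x j - m) := by
      have step0 : ∑ i ∈ S', ∑ j ∈ S, A i j * min (x i - m) (x j - m)
          = ∑ i ∈ S, ∑ j ∈ S, A i j * min (x i - m) (x j - m) :=
        Finset.sum_erase S (Finset.sum_eq_zero fun j hj => hzero i₀ hi₀ j hj (Or.inl rfl))
      rw [← step0]
      refine Finset.sum_congr rfl fun i hi => ?_
      exact (Finset.sum_erase S
        (hzero i (Finset.mem_of_mem_erase hi) i₀ hi₀ (Or.inr rfl))).symm
    have hA1 : m * (∑ i ∈ S, ∑ j ∈ S, A i j) ≤ m * (c * (S.card : ℝ)) :=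
      mul_le_mul_of_nonneg_left (hdens S Finset.Subset.rfl hS) hm0
    have hIH : ∑ i ∈ S', ∑ j ∈ S', A i j * min (x i - m) (x j - m)
        ≤ c * ∑ i ∈ S', (x i - m) :=
      ih S' hsub (fun W hW hWne => hdens W (hW.trans (Finset.erase_subset _ _)) hWne)
        (fun i => x i - m) hx'
    have hcard : (S'.card : ℝ) = (S.card : ℝ) - 1 := by
      rw [hS', Finset.card_erase_of_mem hi₀]
      have : 1 ≤ S.card := Finset.card_pos.mpr hS
      push_cast [Nat.cast_sub this]
      ring
    have hsumx : ∑ i ∈ S, x i = m + ∑ i ∈ S', x i := by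
      rw [hS', ← Finset.add_sum_erase S x hi₀]
    have hsum' : ∑ i ∈ S', (x i - m) = (∑ i ∈ S', x i) - (S'.card : ℝ) * m := by
      rw [Finset.sum_sub_distrib, Finset.sum_const, nsmul_eq_mul]
    rw [key, hdrop]
    have := hA1
    calc m * (∑ i ∈ S, ∑ j ∈ S, A i j)
          + ∑ i ∈ S', ∑ j ∈ S', A i j * min (x i - m) (x j - m)
        ≤ m * (c * (S.card : ℝ)) + c * ∑ i ∈ S', (x i - m) := by
          exact add_le_add hA1 hIH
      _ = c * ∑ i ∈ S, x i := by
          rw [hsum', hsumx, hcard]; ring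


/-- Low-density contribution: if every nonempty `W ⊆ Π` has total internal edge weight
at most `γk·|W|` (i.e. `∑_{i,j∈W} A_{ij} ≤ 2γk·|W|` counting ordered pairs), then
`∑_{i,j∈Π} A_{ij}⟪X_i,X_j⟫ ≤ 2γk·∑_{i∈Π}‖X_i‖²`. -/
theorem low_density_contribution
    (n k : ℕ) (hk : 0 < k) (hkn : k ≤ n)
    (Adj : Fin n → Fin n → Prop) (hAdjSymm : ∀ i j, Adj i j → Adj j i)
    (A : Fin n → Fin n → ℝ)
    (hAsymm : ∀ i j, A i j = A j i) (hAnn : ∀ i j, 0 ≤ A i j)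
    (hAE : ∀ i j, ¬ Adj i j → A i j = 0)
    (Pi : Finset (Fin n)) (γ : ℝ) (hγ : 0 ≤ γ)
    (hdens : ∀ W ⊆ Pi, W.Nonempty →
      ∑ i ∈ W, ∑ j ∈ W, A i j ≤ 2 * (γ * (k : ℝ)) * (W.card : ℝ))
    (X : Fin n → EuclideanSpace ℝ (Fin (n + 1)))
    (I : EuclideanSpace ℝ (Fin (n + 1)))
    (hfeas : SDPFeasible k Adj X I) :
    ∑ i ∈ Pi, ∑ j ∈ Pi, A i j * ⟪X i, X j⟫ ≤
      2 * (γ * (k : ℝ)) * ∑ i ∈ Pi, ⟪X i, X i⟫ := by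

  obtain ⟨h1, h2, h3, h4, h5, h6, h7⟩ := hfeas
  have hx : ∀ i : Fin n, (0:ℝ) ≤ ⟪X i, X i⟫ := fun i => real_inner_self_nonneg
  have hstep : ∑ i ∈ Pi, ∑ j ∈ Pi, A i j * ⟪X i, X j⟫
      ≤ ∑ i ∈ Pi, ∑ j ∈ Pi, A i j * min ⟪X i, X i⟫ ⟪X j, X j⟫ := by
    refine Finset.sum_le_sum fun i hi => Finset.sum_le_sum fun j hj => ?_
    refine mul_le_mul_of_nonneg_left ?_ (hAnn i j)
    rcases eq_or_ne i j with rfl | hij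
    · simp
    · refine le_min (h4 i j hij).2 ?_
      rw [real_inner_comm]
      exact (h4 j i hij.symm).2
  refine hstep.trans ?_
  exact aux_min_density A hAnn (2 * (γ * (k:ℝ))) Pi hdens
    (fun i => ⟪X i, X i⟫) (fun i _ => hx i)
end

section
/- Let Π_1,…,Π_t be pairwise disjoint subsets of V ∖ S and γ ≥ 0, and suppose that for every ℓ ∈ [t] and every nonempty subset W ⊆ Π_ℓ the total weight of edges of G with both endpoints in W is at most γk·|W|. Then for every SDP-feasible solution {X_1,…,X_n, I}, one has ∑_{ℓ=1}^{t} ∑_{i,j∈Π_ℓ} A_{ij}⟨X_i,X_j⟩ ≤ 2γk²(1 − E_{i∼S}‖X_i‖²). -/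
open scoped RealInnerProductSpace BigOperators
open Finset

lemma min_layer {n : ℕ} (A : Fin n → Fin n → ℝ) (c : ℝ) (hc : 0 ≤ c) :
    ∀ (N : ℕ) (W : Finset (Fin n)), W.card ≤ N → ∀ (a : Fin n → ℝ),
    (∀ i ∈ W, 0 ≤ a i) →
    (∀ W' ⊆ W, W'.Nonempty → ∑ i ∈ W', ∑ j ∈ W', A i j ≤ c * W'.card) →
    ∑ i ∈ W, ∑ j ∈ W, A i j * min (a i) (a j) ≤ c * ∑ i ∈ W, a i := by
  intro N
  induction N with
  | zero =>
    intro W hW a _ _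
    have : W = ∅ := Finset.card_eq_zero.mp (Nat.le_zero.mp hW)
    subst this; simp
  | succ N ih =>
    intro W hW a ha hdens
    rcases W.eq_empty_or_nonempty with rfl | hne
    · simp
    obtain ⟨i0, hi0, hmin⟩ := Finset.exists_min_image W a hne
    set m := a i0 with hm
    have hm0 : 0 ≤ m := ha i0 hi0
    set W' := W.erase i0 with hW'
    have hsub : W' ⊆ W := Finset.erase_subset _ _
    have hcard' : W'.card = W.card - 1 := Finset.card_erase_of_mem hi0
    have hWpos : 1 ≤ W.card := Finset.card_pos.mpr hne
    have hcard : W'.card ≤ N := by omega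
    set b : Fin n → ℝ := fun i => a i - m with hb
    have hminb : ∀ i j, min (a i) (a j) = m + min (b i) (b j) := by
      intro i j
      simp only [hb]
      rcases le_total (a i) (a j) with h | h
      · rw [min_eq_left h, min_eq_left (by linarith)]; ring
      · rw [min_eq_right h, min_eq_right (by linarith)]; ring
    have hsplit : ∑ i ∈ W, ∑ j ∈ W, A i j * min (a i) (a j)
        = (∑ i ∈ W, ∑ j ∈ W, A i j * m)
          + ∑ i ∈ W, ∑ j ∈ W, A i j * min (b i) (b j) := by
      rw [← Finset.sum_add_distrib]
      refine Finset.sum_congr rfl fun i _ => ?_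
      rw [← Finset.sum_add_distrib]
      refine Finset.sum_congr rfl fun j _ => ?_
      rw [hminb]; ring
    have hS1 : ∑ i ∈ W, ∑ j ∈ W, A i j * m ≤ m * (c * W.card) := by
      have hd := hdens W (Finset.Subset.refl W) hne
      calc ∑ i ∈ W, ∑ j ∈ W, A i j * m = (∑ i ∈ W, ∑ j ∈ W, A i j) * m := by
            rw [Finset.sum_mul]; refine Finset.sum_congr rfl fun i _ => ?_
            rw [Finset.sum_mul]
        _ ≤ (c * W.card) * m := mul_le_mul_of_nonneg_right hd hm0
        _ = m * (c * W.card) := by ring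
    have hzero_row : ∀ j ∈ W, A i0 j * min (b i0) (b j) = 0 := by
      intro j hj
      have hbj : 0 ≤ b j := by have := hmin j hj; simp only [hb]; linarith
      have hbi0 : b i0 = 0 := by simp [hb, hm]
      rw [hbi0, min_eq_left hbj, mul_zero]
    have hzero_col : ∀ i ∈ W, A i i0 * min (b i) (b i0) = 0 := by
      intro i hi
      have : min (b i) (b i0) = 0 := by
        have := hmin i hi
        simp only [hb]
        rw [min_eq_right (by linarith)]; ring
      rw [this, mul_zero]
    have hS2eq : ∑ i ∈ W, ∑ j ∈ W, A i j * min (b i) (b j)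
        = ∑ i ∈ W', ∑ j ∈ W', A i j * min (b i) (b j) := by
      rw [← Finset.sum_subset hsub (fun i hi hni => ?_)]
      · refine Finset.sum_congr rfl fun i hi => ?_
        rw [← Finset.sum_subset hsub (fun j hj hnj => ?_)]
        have : j = i0 := by
          by_contra h; exact hnj (Finset.mem_erase.mpr ⟨h, hj⟩)
        subst this
        exact hzero_col i (hsub hi)
      · have : i = i0 := by
          by_contra h; exact hni (Finset.mem_erase.mpr ⟨h, hi⟩)
        subst this
        exact Finset.sum_eq_zero fun j hj => hzero_row j hj
    have hbnn : ∀ i ∈ W', 0 ≤ b i := fun i hi => by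
      have := hmin i (hsub hi); simp [hb]; linarith
    have hdens' : ∀ V ⊆ W', V.Nonempty → ∑ i ∈ V, ∑ j ∈ V, A i j ≤ c * V.card :=
      fun V hV hVne => hdens V (hV.trans hsub) hVne
    have hS2 : ∑ i ∈ W', ∑ j ∈ W', A i j * min (b i) (b j) ≤ c * ∑ i ∈ W', b i :=
      ih W' hcard b hbnn hdens'
    have hsumb : ∑ i ∈ W', b i = (∑ i ∈ W', a i) - W'.card * m := by
      simp [hb, Finset.sum_sub_distrib, mul_comm]
    have hsuma : ∑ i ∈ W, a i = m + ∑ i ∈ W', a i := by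
      rw [hW', ← Finset.add_sum_erase W a hi0]
    have hcards : (W.card : ℝ) = (W'.card : ℝ) + 1 := by
      have h : W.card = W'.card + 1 := by omega
      rw [h]; push_cast; ring
    rw [hsplit, hS2eq]
    have e1 : m * (c * (W.card : ℝ)) = c * m * (W'.card : ℝ) + c * m := by
      rw [hcards]; ring
    have hS2' : ∑ i ∈ W', ∑ j ∈ W', A i j * min (b i) (b j)
        ≤ c * (∑ i ∈ W', a i) - c * m * (W'.card : ℝ) := by
      calc ∑ i ∈ W', ∑ j ∈ W', A i j * min (b i) (b j) ≤ c * ∑ i ∈ W', b i := hS2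
        _ = c * (∑ i ∈ W', a i) - c * m * (W'.card : ℝ) := by rw [hsumb]; ring
    have e3 : c * ∑ i ∈ W, a i = c * m + c * ∑ i ∈ W', a i := by rw [hsuma]; ring
    linarith [hS1, hS2', e1, e3]


/-- Summed low-density contribution: if each `Π_ℓ ⊆ V ∖ S` (pairwise disjoint) satisfies
the density condition, then
`∑_ℓ ∑_{i,j∈Π_ℓ} A_{ij}⟪X_i,X_j⟫ ≤ 2γk²(1 − E_{i∼S}‖X_i‖²)`. -/
theorem low_density_blocks_contribution
    (n k t : ℕ) (hk : 0 < k) (hkn : k ≤ n)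
    (Adj : Fin n → Fin n → Prop) (hAdjSymm : ∀ i j, Adj i j → Adj j i)
    (A : Fin n → Fin n → ℝ)
    (hAsymm : ∀ i j, A i j = A j i) (hAnn : ∀ i j, 0 ≤ A i j)
    (hAE : ∀ i j, ¬ Adj i j → A i j = 0)
    (S : Finset (Fin n)) (hS : S.card = k)
    (P : Fin t → Finset (Fin n))
    (hPsub : ∀ ℓ, P ℓ ⊆ Sᶜ)
    (hPdisj : ∀ ℓ ℓ', ℓ ≠ ℓ' → Disjoint (P ℓ) (P ℓ'))
    (γ : ℝ) (hγ : 0 ≤ γ)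
    (hdens : ∀ ℓ, ∀ W ⊆ P ℓ, W.Nonempty →
      ∑ i ∈ W, ∑ j ∈ W, A i j ≤ 2 * (γ * (k : ℝ)) * (W.card : ℝ))
    (X : Fin n → EuclideanSpace ℝ (Fin (n + 1)))
    (I : EuclideanSpace ℝ (Fin (n + 1)))
    (hfeas : SDPFeasible k Adj X I) :
    ∑ ℓ : Fin t, ∑ i ∈ P ℓ, ∑ j ∈ P ℓ, A i j * ⟪X i, X j⟫ ≤
      2 * γ * (k : ℝ) ^ 2 * (1 - (1 / (k : ℝ)) * ∑ i ∈ S, ⟪X i, X i⟫) := by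
  obtain ⟨h1, h2, h3, h4, h5, h6, h7⟩ := hfeas
  set a : Fin n → ℝ := fun i => ⟪X i, X i⟫ with ha
  have hann : ∀ i, 0 ≤ a i := fun i => real_inner_self_nonneg
  have hmin : ∀ i j, ⟪X i, X j⟫ ≤ min (a i) (a j) := by
    intro i j
    rcases eq_or_ne i j with rfl | hij
    · simp [ha]
    · have h1 := (h4 i j hij).2
      have h2 := (h4 j i hij.symm).2
      rw [real_inner_comm] at h2
      exact le_min h1 h2
  set c : ℝ := 2 * (γ * (k : ℝ)) with hc
  have hc0 : 0 ≤ c := by positivity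
  -- per-block bound
  have hblock : ∀ ℓ, ∑ i ∈ P ℓ, ∑ j ∈ P ℓ, A i j * ⟪X i, X j⟫ ≤ c * ∑ i ∈ P ℓ, a i := by
    intro ℓ
    have step1 : ∑ i ∈ P ℓ, ∑ j ∈ P ℓ, A i j * ⟪X i, X j⟫
        ≤ ∑ i ∈ P ℓ, ∑ j ∈ P ℓ, A i j * min (a i) (a j) := by
      refine Finset.sum_le_sum fun i _ => Finset.sum_le_sum fun j _ => ?_
      exact mul_le_mul_of_nonneg_left (hmin i j) (hAnn i j)
    have step2 := min_layer A c hc0 (P ℓ).card (P ℓ) le_rfl a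
      (fun i _ => hann i) (fun W hW hWne => hdens ℓ W hW hWne)
    linarith
  -- sum over blocks
  have hsum1 : ∑ ℓ : Fin t, ∑ i ∈ P ℓ, ∑ j ∈ P ℓ, A i j * ⟪X i, X j⟫
      ≤ c * ∑ ℓ : Fin t, ∑ i ∈ P ℓ, a i := by
    rw [Finset.mul_sum]
    exact Finset.sum_le_sum fun ℓ _ => hblock ℓ
  -- disjoint blocks inside Sᶜ
  have hdisj : ((Finset.univ : Finset (Fin t)) : Set (Fin t)).PairwiseDisjoint P := by
    intro ℓ _ ℓ' _ h; exact hPdisj ℓ ℓ' h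
  have hbi : ∑ ℓ : Fin t, ∑ i ∈ P ℓ, a i = ∑ i ∈ Finset.univ.biUnion P, a i :=
    (Finset.sum_biUnion hdisj).symm
  have hbisub : Finset.univ.biUnion P ⊆ Sᶜ := by
    intro i hi
    obtain ⟨ℓ, _, hℓ⟩ := Finset.mem_biUnion.mp hi
    exact hPsub ℓ hℓ
  have hsum2 : ∑ ℓ : Fin t, ∑ i ∈ P ℓ, a i ≤ ∑ i ∈ Sᶜ, a i := by
    rw [hbi]
    exact Finset.sum_le_sum_of_subset_of_nonneg hbisub (fun i _ _ => hann i)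
  -- total mass bound: ∑ a i ≤ k
  have htot : ∑ i, a i ≤ (k : ℝ) := by
    exact h1.le
  have hcompl : ∑ i ∈ Sᶜ, a i = (∑ i, a i) - ∑ i ∈ S, a i := by
    have := Finset.sum_add_sum_compl S a
    linarith
  have hfin : ∑ i ∈ Sᶜ, a i ≤ (k : ℝ) - ∑ i ∈ S, a i := by
    rw [hcompl]
    have : 0 ≤ ∑ i ∈ S, a i := Finset.sum_nonneg fun i _ => hann i
    linarith
  have hkne : (k : ℝ) ≠ 0 := by positivity
  have hrhs : 2 * γ * (k : ℝ) ^ 2 * (1 - (1 / (k : ℝ)) * ∑ i ∈ S, a i)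
      = c * ((k : ℝ) - ∑ i ∈ S, a i) := by
    field_simp [hc]
    ring
  rw [hrhs]
  calc ∑ ℓ : Fin t, ∑ i ∈ P ℓ, ∑ j ∈ P ℓ, A i j * ⟪X i, X j⟫
      ≤ c * ∑ ℓ : Fin t, ∑ i ∈ P ℓ, a i := hsum1
    _ ≤ c * ∑ i ∈ Sᶜ, a i := mul_le_mul_of_nonneg_left hsum2 hc0
    _ ≤ c * ((k : ℝ) - ∑ i ∈ S, a i) := mul_le_mul_of_nonneg_left hfin hc0
end

section
/- Let {X_1,…,X_n, I} be an SDP-feasible solution, let ψ ∈ (0, 1/9), set α := 1/(3√ψ), and define T := {i ∈ V : ‖X_i‖² ≥ 1 − αψ}. Then for all i, j ∈ T one has ⟨X_i,X_j⟩ ≥ 1 − 3αψ > 0, and consequently every pair of distinct vertices of T is joined by an edge of G, i.e., the induced subgraph G[T] is a clique. -/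
open scoped RealInnerProductSpace BigOperators
open Finset

open scoped Classical in
/-- `T` is a clique: for `ψ ∈ (0, 1/9)`, `α = 1/(3√ψ)` and
`T = {i ∈ V : ‖X_i‖² ≥ 1 − αψ}`, all pairs in `T` satisfy
`⟪X_i,X_j⟫ ≥ 1 − 3αψ > 0`, hence every pair of distinct vertices of `T` is adjacent,
i.e. the induced subgraph `G[T]` is a clique. -/
theorem T_is_clique
    (n k : ℕ) (hk : 0 < k) (hkn : k ≤ n)
    (Adj : Fin n → Fin n → Prop) (hAdjSymm : ∀ i j, Adj i j → Adj j i)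
    (X : Fin n → EuclideanSpace ℝ (Fin (n + 1)))
    (I : EuclideanSpace ℝ (Fin (n + 1)))
    (hfeas : SDPFeasible k Adj X I)
    (ψ : ℝ) (hψ0 : 0 < ψ) (hψ1 : ψ < 1 / 9)
    (α : ℝ) (hα : α = 1 / (3 * Real.sqrt ψ))
    (T : Finset (Fin n))
    (hT : T = Finset.univ.filter (fun i => 1 - α * ψ ≤ ⟪X i, X i⟫)) :
    (∀ i ∈ T, ∀ j ∈ T, 1 - 3 * (α * ψ) ≤ ⟪X i, X j⟫) ∧
    (0 < 1 - 3 * (α * ψ)) ∧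
    (∀ i ∈ T, ∀ j ∈ T, i ≠ j → Adj i j) := by

  obtain ⟨hf1, hf2, hf3, hf4, hf5, hf6, hf7⟩ := hfeas
  have hf6' : ∀ m, ⟪I, X m⟫ = ⟪X m, X m⟫ := fun m =>
    (real_inner_comm (X m) I).trans (hf6 m)
  have hsψ : 0 < Real.sqrt ψ := Real.sqrt_pos.mpr hψ0
  have hsq : Real.sqrt ψ * Real.sqrt ψ = ψ := Real.mul_self_sqrt hψ0.le
  have haψ : α * ψ = Real.sqrt ψ / 3 := by
    rw [hα]; field_simp; nlinarith
  have hsmall : Real.sqrt ψ < 1 / 3 := by nlinarith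
  have ha0 : 0 < α * ψ := by rw [haψ]; positivity
  have hpos : 0 < 1 - 3 * (α * ψ) := by rw [haψ]; linarith
  have key : ∀ i ∈ T, ∀ j ∈ T, 1 - 3 * (α * ψ) ≤ ⟪X i, X j⟫ := by
    intro i hi j hj
    rw [hT, mem_filter] at hi hj
    set a := α * ψ with ha'
    have hdi : ⟪I - X i, I - X i⟫ = 1 - ⟪X i, X i⟫ := by
      simp only [inner_sub_left, inner_sub_right, hf7, hf6, hf6']
      ring
    have hdj : ⟪I - X j, I - X j⟫ = 1 - ⟪X j, X j⟫ := by
      simp only [inner_sub_left, inner_sub_right, hf7, hf6, hf6']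
      ring
    have hu : ‖I - X i‖ ^ 2 ≤ a := by
      rw [← real_inner_self_eq_norm_sq, hdi]; linarith [hi.2]
    have hv : ‖I - X j‖ ^ 2 ≤ a := by
      rw [← real_inner_self_eq_norm_sq, hdj]; linarith [hj.2]
    have hcs := abs_real_inner_le_norm (I - X i) (I - X j)
    have habs := neg_abs_le ⟪I - X i, I - X j⟫
    have hlow : -a ≤ ⟪I - X i, I - X j⟫ := by
      nlinarith [sq_nonneg (‖I - X i‖ - ‖I - X j‖), norm_nonneg (I - X i),
        norm_nonneg (I - X j)]
    have hexp : ⟪I - X i, I - X j⟫ =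
        1 - ⟪X j, X j⟫ - ⟪X i, X i⟫ + ⟪X i, X j⟫ := by
      simp only [inner_sub_left, inner_sub_right, hf7, hf6, hf6']
      ring
    have h1 := hi.2
    have h2 := hj.2
    linarith [hexp ▸ hlow]
  refine ⟨key, hpos, ?_⟩
  intro i hi j hj hne
  by_contra hadj
  have h0 := hf3 i j hne hadj
  have := key i hi j hj
  linarith
end
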